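/- arXiv:2412.03750 — 3 statements merged into one kernel-verified Lean document; each statement's English description precedes it below -/
import Mathlib

section
/- Let (𝐬, r(𝐬)) ∈ 𝒮 be connected and stable, with r(𝐬) = (1, r_1, …, r_k). Let 1 ≤ m ≤ k−1 be such that 𝐬(r_{m−1}−1, r_m) ∈ S_← and assume r_m + 2 ≤ r. If j_{r_m−1} = j_{r_m+1}, then r_{m+1} = r_m + 1, and if moreover m ≥ 2 then r_m > r_{m−1} + 1. -/
namespace AltSnakePaper

/-- `[i,j] ∈ 𝕀ₙ`: the interval condition `0 ≤ j - i ≤ n + 1`. -/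
def InIn (n : ℕ) (i j : ℤ) : Prop := 0 ≤ j - i ∧ j - i ≤ (n : ℤ) + 1

/-- The intervals `[i1,j1]` and `[i2,j2]` overlap. -/
def Overlap (i1 j1 i2 j2 : ℤ) : Prop :=
  (i1 < i2 ∧ i2 ≤ j1 ∧ j1 < j2) ∨ (i2 < i1 ∧ i1 ≤ j2 ∧ j2 < j1)

/-- The pair `([i1,j1],[i2,j2])` is connected. -/
def ConnPair (n : ℕ) (i1 j1 i2 j2 : ℤ) : Prop :=
  Overlap i1 j1 i2 j2 ∧ InIn n i1 j2 ∧ InIn n i2 j1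

/-- The subtuple `𝐬(a,b)` (entries with indices `a+1, …, b`) lies in `S_→`. -/
def SRight (ii jj : ℕ → ℤ) (a b : ℕ) : Prop :=
  ∀ s, a + 1 ≤ s → s + 1 ≤ b → ii s < ii (s + 1) ∧ jj s < jj (s + 1)

/-- The subtuple `𝐬(a,b)` (entries with indices `a+1, …, b`) lies in `S_←`. -/
def SLeft (ii jj : ℕ → ℤ) (a b : ℕ) : Prop :=
  ∀ s, a + 1 ≤ s → s + 1 ≤ b → ii (s + 1) < ii s ∧ jj (s + 1) < jj s

/-- `(𝐬, r(𝐬))` is an alternating snake, where `𝐬 = ([i_1,j_1],…,[i_r,j_r])`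
(encoded by `ii jj : ℕ → ℤ`, entries indexed `1,…,r`) and
`r(𝐬) = (r_0, r_1, …, r_k)` (encoded by `rr : ℕ → ℕ`). -/
structure IsAltSnake (n r k : ℕ) (rr : ℕ → ℕ) (ii jj : ℕ → ℤ) : Prop where
  hr : 1 ≤ r
  hk : k ≤ r
  mem : ∀ s, 1 ≤ s → s ≤ r → InIn n (ii s) (jj s)
  distinct : ∀ s p, 1 ≤ s → s ≤ r → 1 ≤ p → p ≤ r → s ≠ p → ii s ≠ ii p ∨ jj s ≠ jj p
  rr0 : rr 0 = 1
  rrk : rr k = r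
  rrmono : ∀ m, m < k → rr m < rr (m + 1)
  mono : ∀ m, 1 ≤ m → m ≤ k →
      SRight ii jj (rr (m - 1) - 1) (rr m) ∨ SLeft ii jj (rr (m - 1) - 1) (rr m)
  alt : ∀ m, 1 ≤ m → m < k →
      (SRight ii jj (rr (m - 1) - 1) (rr m) ↔ SLeft ii jj (rr m - 1) (rr (m + 1)))
  nonoverlap : ∀ m s t, 1 ≤ m → m < k → 1 ≤ s → s < rr m → rr m < t → t ≤ r →
      ¬ Overlap (ii s) (jj s) (ii t) (jj t)

/-- The subtuple `𝐬(a,b)` is connected: all consecutive pairs are connected. -/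
def SegConnected (n : ℕ) (ii jj : ℕ → ℤ) (a b : ℕ) : Prop :=
  ∀ s, a + 1 ≤ s → s + 1 ≤ b → ConnPair n (ii s) (jj s) (ii (s + 1)) (jj (s + 1))

/-- The subtuple `𝐬(a,b)` (with its induced r-vector, whose internal break points
are the `rr m` with `a + 1 < rr m < b`) is prime. -/
def SegPrime (n k : ℕ) (rr : ℕ → ℕ) (ii jj : ℕ → ℤ) (a b : ℕ) : Prop :=
  SegConnected n ii jj a b ∧
    ∀ m, 1 ≤ m → m < k → a + 1 < rr m → rr m < b →
      ii (rr m - 1) ≠ ii (rr m + 1) ∧ jj (rr m - 1) ≠ jj (rr m + 1)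

/-- The subtuple `𝐬(a,b)` (with its induced r-vector) is stable. -/
def SegStable (k : ℕ) (rr : ℕ → ℕ) (ii jj : ℕ → ℤ) (a b : ℕ) : Prop :=
  ∀ m, 1 ≤ m → m < k → a + 1 < rr m → rr m < b →
    (ii (rr m + 1) < ii (rr m - 1) → jj (rr m + 1) < ii (rr m - 1)) ∧
    (jj (rr m - 1) < jj (rr m + 1) → jj (rr m - 1) < ii (rr m + 1))

/-- The alternating snake is stable. -/
def Stable (k : ℕ) (rr : ℕ → ℕ) (ii jj : ℕ → ℤ) : Prop :=
  ∀ m, 1 ≤ m → m < k →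
    (ii (rr m + 1) < ii (rr m - 1) → jj (rr m + 1) < ii (rr m - 1)) ∧
    (jj (rr m - 1) < jj (rr m + 1) → jj (rr m - 1) < ii (rr m + 1))

/-- The boundary condition allowing a cut of the snake at `p = rr m - ε`:
`a_{r_m-1} = a_{r_m+1}` for some `a ∈ {i, j}`, with `ε ∈ {0,1}` chosen so that, `b`
denoting the other member of `{i,j}`, one has `b_{r_m−1+2ε} < b_{r_m+1−2ε}` if
`𝐬(r_m−2, r_m) ∈ S_←` and `b_{r_m+1−2ε} < b_{r_m−1+2ε}` if `𝐬(r_m−2, r_m) ∈ S_→`. -/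
def BoundaryCond (k : ℕ) (rr : ℕ → ℕ) (ii jj : ℕ → ℤ) (m ε : ℕ) : Prop :=
  (ii (rr m - 1) = ii (rr m + 1) ∧
    (SLeft ii jj (rr m - 2) (rr m) → jj (rr m - 1 + 2 * ε) < jj (rr m + 1 - 2 * ε)) ∧
    (SRight ii jj (rr m - 2) (rr m) → jj (rr m + 1 - 2 * ε) < jj (rr m - 1 + 2 * ε))) ∨
  (jj (rr m - 1) = jj (rr m + 1) ∧
    (SLeft ii jj (rr m - 2) (rr m) → ii (rr m - 1 + 2 * ε) < ii (rr m + 1 - 2 * ε)) ∧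
    (SRight ii jj (rr m - 2) (rr m) → ii (rr m + 1 - 2 * ε) < ii (rr m - 1 + 2 * ε)))

/-- `p` is an admissible cut point for the prime decomposition. -/
def CutAt (n r k : ℕ) (rr : ℕ → ℕ) (ii jj : ℕ → ℤ) (p : ℕ) : Prop :=
  p = r ∨
  ¬ ConnPair n (ii p) (jj p) (ii (p + 1)) (jj (p + 1)) ∨
  ∃ m ε, 1 ≤ m ∧ m < k ∧ ε ≤ 1 ∧ p = rr m - ε ∧ BoundaryCond k rr ii jj m ε

/-- `0 = c 0 < c 1 < ⋯ < c L = r` are the cut points of a prime decomposition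
of the snake, the prime factors being the segments `𝐬(c t, c (t+1))`. -/
def IsPrimeDecomp (n r k : ℕ) (rr : ℕ → ℕ) (ii jj : ℕ → ℤ) (c : ℕ → ℕ) (L : ℕ) : Prop :=
  1 ≤ L ∧ c 0 = 0 ∧ c L = r ∧ (∀ t, t < L → c t < c (t + 1)) ∧
  (∀ t, t < L → SegPrime n k rr ii jj (c t) (c (t + 1))) ∧
  (∀ t, 1 ≤ t → t ≤ L → CutAt n r k rr ii jj (c t))

/-- The segment `𝐬(a,b)` is contained in a prime factor of `𝐬`. -/
def ContainedInPF (n r k : ℕ) (rr : ℕ → ℕ) (ii jj : ℕ → ℤ) (a b : ℕ) : Prop :=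
  ∃ c L t, IsPrimeDecomp n r k rr ii jj c L ∧ t < L ∧ c t ≤ a ∧ b ≤ c (t + 1)

/-! In the stable snake, `j_{r_m-1} = j_{r_m+1}` forces `i_{r_m-1} ≤ i_{r_m+1}`, since otherwise
stability would put `[i_{r_m+1}, j_{r_m+1}]` strictly to the left of `i_{r_m-1} ≤ j_{r_m-1}`.
Both claims then follow by exhibiting two intervals on opposite sides of a corner `r_{m'}` that
would overlap, against (alt2): `[i_{r_m-1}, j_{r_m-1}]` and `[i_{r_m+2}, j_{r_m+2}]` if the
increasing segment after `r_m` were longer than one step, and `[i_{r_m-2}, j_{r_m-2}]` and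
`[i_{r_m+1}, j_{r_m+1}]` if `r_{m-1} = r_m - 1`; in the latter case stability at `r_{m-1}` closes
the argument. -/

theorem Overlap.le_of_lt {i₁ j₁ i₂ j₂ : ℤ} (h : Overlap i₁ j₁ i₂ j₂) (hi : i₁ < i₂) : i₂ ≤ j₁ := by
  rcases h with ⟨-, h, -⟩ | ⟨h, -, -⟩
  · exact h
  · exact absurd hi h.not_gt

theorem ConnPair.le_of_lt {n : ℕ} {i₁ j₁ i₂ j₂ : ℤ} (h : ConnPair n i₁ j₁ i₂ j₂) (hi : i₁ < i₂) :
    i₂ ≤ j₁ :=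
  h.1.le_of_lt hi

theorem Stable.le_of_jj_eq {k : ℕ} {rr : ℕ → ℕ} {ii jj : ℕ → ℤ} (hst : Stable k rr ii jj)
    {m : ℕ} (hm₁ : 1 ≤ m) (hm₂ : m < k) (hle : ii (rr m - 1) ≤ jj (rr m - 1))
    (hjeq : jj (rr m - 1) = jj (rr m + 1)) : ii (rr m - 1) ≤ ii (rr m + 1) := by
  by_contra hlt
  have := (hst m hm₁ hm₂).1 (not_le.mp hlt)
  omega

namespace IsAltSnake

variable {n r k : ℕ} {rr : ℕ → ℕ} {ii jj : ℕ → ℤ} (h : IsAltSnake n r k rr ii jj)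
include h

theorem strictMonoOn_rr : StrictMonoOn rr (Set.Iic k) :=
  strictMonoOn_Iic_of_lt_succ h.rrmono

theorem one_le_rr {m : ℕ} (hm : m ≤ k) : 1 ≤ rr m := by
  have := h.strictMonoOn_rr.monotoneOn (Set.mem_Iic.2 (Nat.zero_le k)) (Set.mem_Iic.2 hm)
    (Nat.zero_le m)
  rwa [h.rr0] at this

theorem rr_le {m : ℕ} (hm : m ≤ k) : rr m ≤ r := by
  have := h.strictMonoOn_rr.monotoneOn (Set.mem_Iic.2 hm) (Set.mem_Iic.2 le_rfl) hm
  rwa [h.rrk] at this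

theorem rr_pred_lt {m : ℕ} (hm₁ : 1 ≤ m) (hm₂ : m ≤ k) : rr (m - 1) < rr m := by
  simpa [Nat.sub_add_cancel hm₁] using h.rrmono (m - 1) (by omega)

theorem sRight_succ_of_sLeft {m : ℕ} (hm₁ : 1 ≤ m) (hm₂ : m < k)
    (hdir : SLeft ii jj (rr (m - 1) - 1) (rr m)) : SRight ii jj (rr m - 1) (rr (m + 1)) := by
  refine (h.mono (m + 1) (by omega) hm₂).resolve_right fun hleft ↦ ?_
  have hright := (h.alt m hm₁ hm₂).2 hleft
  have hlt := h.rr_pred_lt hm₁ hm₂.le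
  have h1 := h.one_le_rr (m := m - 1) (by omega)
  have := hright (rr (m - 1)) (by omega) (by omega)
  have := hdir (rr (m - 1)) (by omega) (by omega)
  omega

theorem rr_succ_eq_of_jj_eq (hc : SegConnected n ii jj 0 r) (hst : Stable k rr ii jj) {m : ℕ}
    (hm₁ : 1 ≤ m) (hm₂ : m < k) (hdir : SLeft ii jj (rr (m - 1) - 1) (rr m))
    (hjeq : jj (rr m - 1) = jj (rr m + 1)) : rr (m + 1) = rr m + 1 := by
  have hnext := h.rrmono m hm₂
  have hbound := h.rr_le (m := m + 1) hm₂
  have hpos := h.one_le_rr (m := m - 1) (by omega)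
  have hprev := h.rr_pred_lt hm₁ hm₂.le
  by_contra hne
  have hinc : ii (rr m + 1) < ii (rr m + 2) ∧ jj (rr m + 1) < jj (rr m + 2) :=
    h.sRight_succ_of_sLeft hm₁ hm₂ hdir (rr m + 1) (by omega) (by omega)
  have hmeet : ii (rr m + 2) ≤ jj (rr m + 1) :=
    (hc (rr m + 1) (by omega) (by omega)).le_of_lt hinc.1
  have hmem := (h.mem (rr m - 1) (by omega) (by omega)).1
  have hi := hst.le_of_jj_eq hm₁ hm₂ (by omega) hjeq
  exact h.nonoverlap m (rr m - 1) (rr m + 2) hm₁ hm₂ (by omega) (by omega) (by omega) (by omega)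
    (Or.inl ⟨by omega, by omega, by omega⟩)

theorem sRight_pred_of_sLeft {m : ℕ} (hm : 2 ≤ m) (hm₂ : m ≤ k)
    (hdir : SLeft ii jj (rr (m - 1) - 1) (rr m)) : SRight ii jj (rr (m - 2) - 1) (rr (m - 1)) := by
  have := (h.alt (m - 1) (by omega) (by omega)).2
  rw [Nat.sub_add_cancel (by omega : 1 ≤ m), show m - 1 - 1 = m - 2 by omega] at this
  exact this hdir

theorem lt_of_jj_eq (hst : Stable k rr ii jj) {m : ℕ} (hm₁ : 1 ≤ m) (hm₂ : m < k)
    (hr : rr m + 1 ≤ r) (hjeq : jj (rr m - 1) = jj (rr m + 1)) : ii (rr m - 1) < ii (rr m + 1) := by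
  have hprev := h.rr_pred_lt hm₁ hm₂.le
  have hpos := h.one_le_rr (m := m - 1) (by omega)
  have hmem := (h.mem (rr m - 1) (by omega) (by omega)).1
  have hle := hst.le_of_jj_eq hm₁ hm₂ (by omega) hjeq
  have hne := (h.distinct (rr m - 1) (rr m + 1) (by omega) (by omega) (by omega) hr
    (by omega)).resolve_right (not_not.2 hjeq)
  omega

theorem rr_pred_add_one_lt_of_jj_eq (hc : SegConnected n ii jj 0 r) (hst : Stable k rr ii jj)
    {m : ℕ} (hm : 2 ≤ m) (hm₂ : m < k) (hdir : SLeft ii jj (rr (m - 1) - 1) (rr m))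
    (hjeq : jj (rr m - 1) = jj (rr m + 1)) : rr (m - 1) + 1 < rr m := by
  have hnext := h.rrmono m hm₂
  have hbound := h.rr_le (m := m + 1) hm₂
  have hpos := h.one_le_rr (m := m - 2) (by omega)
  have hprev₂ := h.rr_pred_lt (m := m - 1) (by omega) (by omega)
  have hprev := h.rr_pred_lt (m := m) (by omega) (by omega)
  rw [show m - 1 - 1 = m - 2 by omega] at hprev₂
  have hi : ii (rr m - 1) < ii (rr m + 1) := h.lt_of_jj_eq hst (by omega) hm₂ (by omega) hjeq
  by_contra hadj
  obtain ⟨p, hp, hq⟩ : ∃ p, rr (m - 1) = p + 1 ∧ rr m = p + 2 :=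
    ⟨rr (m - 1) - 1, by omega, by omega⟩
  rw [hq] at hi hjeq
  change ii (p + 1) < ii (p + 3) at hi
  change jj (p + 1) = jj (p + 3) at hjeq
  have hdec : ii (p + 2) < ii (p + 1) := (hdir (p + 1) (by omega) (by omega)).1
  have hinc : ii (p + 2) < ii (p + 3) :=
    (h.sRight_succ_of_sLeft (by omega) hm₂ hdir (p + 2) (by omega) (by omega)).1
  have hinc₂ : ii p < ii (p + 1) ∧ jj p < jj (p + 1) :=
    h.sRight_pred_of_sLeft hm hm₂.le hdir p (by omega) (by omega)
  have hmeet₁ : ii (p + 1) ≤ jj p := (hc p (by omega) (by omega)).le_of_lt hinc₂.1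
  have hmeet₂ : ii (p + 3) ≤ jj (p + 2) := (hc (p + 2) (by omega) (by omega)).le_of_lt hinc
  have hsep : jj p < ii (p + 3) := by
    by_contra hov
    exact h.nonoverlap (m - 1) p (p + 3) (by omega) (by omega) (by omega) (by omega) (by omega)
      (by omega) (Or.inl ⟨by omega, by omega, by omega⟩)
  have hstab : jj p < jj (p + 2) → jj p < ii (p + 2) := by
    have := (hst (m - 1) (by omega) (by omega)).2
    rw [hp] at this
    exact this
  have := hstab (by omega)
  omega

end IsAltSnake

theorem stmt_12_general (n r k : ℕ) (rr : ℕ → ℕ) (ii jj : ℕ → ℤ)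
    (h : IsAltSnake n r k rr ii jj)
    (hc : SegConnected n ii jj 0 r) (hst : Stable k rr ii jj)
    (m : ℕ) (hm1 : 1 ≤ m) (hm2 : m < k)
    (hdir : SLeft ii jj (rr (m - 1) - 1) (rr m))
    (hjeq : jj (rr m - 1) = jj (rr m + 1)) :
    rr (m + 1) = rr m + 1 ∧ (2 ≤ m → rr (m - 1) + 1 < rr m) :=
  ⟨h.rr_succ_eq_of_jj_eq hc hst hm1 hm2 hdir hjeq,
    fun hm ↦ h.rr_pred_add_one_lt_of_jj_eq hc hst hm hm2 hdir hjeq⟩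

/-- Proposition (jeq (ii)): for a connected stable alternating snake, if
`𝐬(r_{m−1}−1, r_m) ∈ S_←`, `r_m + 2 ≤ r` and `j_{r_m−1} = j_{r_m+1}`, then
`r_{m+1} = r_m + 1`, and if moreover `m ≥ 2` then `r_m > r_{m−1} + 1`. -/
theorem stmt_12 (n r k : ℕ) (hn : 1 ≤ n) (rr : ℕ → ℕ) (ii jj : ℕ → ℤ)
    (h : IsAltSnake n r k rr ii jj)
    (hc : SegConnected n ii jj 0 r) (hst : Stable k rr ii jj)
    (m : ℕ) (hm1 : 1 ≤ m) (hm2 : m < k)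
    (hdir : SLeft ii jj (rr (m - 1) - 1) (rr m)) (hr2 : rr m + 2 ≤ r)
    (hjeq : jj (rr m - 1) = jj (rr m + 1)) :
    rr (m + 1) = rr m + 1 ∧ (2 ≤ m → rr (m - 1) + 1 < rr m) :=
  stmt_12_general n r k rr ii jj h hc hst m hm1 hm2 hdir hjeq

end AltSnakePaper
end

section
/- Let (𝐬, r(𝐬)) ∈ 𝒮 be prime and stable with r(𝐬) = (1, r_1, …, r_k). For 1 ≤ p ≤ r_1 define 𝐬_p ∈ 𝕀_n^{r−1} by 𝐬_p = ([i_1,j_2],[i_2,j_3],…,[i_{p−1},j_p]) ∨ 𝐬(p,r) if 𝐬(0,r_1) ∈ S_←, and 𝐬_p = ([i_2,j_1],[i_3,j_2],…,[i_p,j_{p−1}]) ∨ 𝐬(p,r) if 𝐬(0,r_1) ∈ S_→ (so 𝐬_1 = 𝐬(1,r)). Then, with r(𝐬_p) = (1, r_{1+δ}−1, r_{2+δ}−1, …, r_k−1) where δ = 1 if r_1 = 2 and δ = 0 otherwise (degenerate entries being omitted for small r), the pair (𝐬_p, r(𝐬_p)) is a stable alternating snake. -/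
/-!
Suppose `𝐬(0,r_1) ∈ S_←`. Beyond position `p` the snake `𝐬_p` is `𝐬` shifted by one, and its
first `p - 1` entries are the merged intervals `[i_s, j_{s+1}]`, so segment `m` of `𝐬_p` runs
along segment `m + δ` of `𝐬`. The one genuinely new comparison is at the first break, where
primality and stability force `i_{r_1-1} < i_{r_1+1}`; together with the non-overlap condition
of `𝐬` this rules out coincidences, overlaps and instabilities involving merged intervals.
The case `𝐬(0,r_1) ∈ S_→` follows by the symmetry `[i, j] ↦ [-j, -i]`, which exchanges `S_→`
and `S_←`.
-/

namespace AltSnakePaper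

/-- `δ = 1` if `r_1 = 2` and `δ = 0` otherwise. -/
def delta1 (rr : ℕ → ℕ) : ℕ := if rr 1 = 2 then 1 else 0

/-- The r-vector `(1, r_{1+δ}−1, …, r_k−1)` of the snake `𝐬_p`. -/
def rrQ (rr : ℕ → ℕ) : ℕ → ℕ := fun t => if t = 0 then 1 else rr (t + delta1 rr) - 1

/-- The condition for the entry `A(𝐬)_{p,ℓ}` to be `v(i_p, j_ℓ)` (rather than `0`),
with the conventions `r_{-1} = 1` (note `rr 0 = 1` and truncated subtraction) and
`r_{k+1} = r` (note `rr k = r` and the clamping `min (m+1) k`). -/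
def EntryOK (n k : ℕ) (rr : ℕ → ℕ) (ii jj : ℕ → ℤ) (p ℓ : ℕ) : Prop :=
  0 ≤ jj ℓ - ii p ∧ jj ℓ - ii p ≤ (n : ℤ) + 1 ∧
  SegConnected n ii jj (min p ℓ - 1) (max p ℓ) ∧
  ∀ m, 1 ≤ m → m ≤ k → rr (m - 1) ≤ p → p ≤ rr m →
    (SLeft ii jj (rr (m - 1) - 1) (rr m) → rr (m - 2) ≤ ℓ ∧ ℓ ≤ rr (min (m + 1) k)) ∧
    (SRight ii jj (rr (m - 1) - 1) (rr m) → rr (m - 1) ≤ ℓ ∧ ℓ ≤ rr m)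

open Classical in
/-- The `(p,ℓ)` entry of the matrix `A(𝐬)` (1-indexed). -/
noncomputable def Aent {R : Type*} [CommRing R] (v : ℤ → ℤ → R)
    (n k : ℕ) (rr : ℕ → ℕ) (ii jj : ℕ → ℤ) (p ℓ : ℕ) : R :=
  if EntryOK n k rr ii jj p ℓ then v (ii p) (jj ℓ) else 0

/-- The matrix `A(𝐬)`. -/
noncomputable def snakeMat {R : Type*} [CommRing R] (v : ℤ → ℤ → R)
    (n r k : ℕ) (rr : ℕ → ℕ) (ii jj : ℕ → ℤ) : Matrix (Fin r) (Fin r) R :=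
  Matrix.of fun a b => Aent v n k rr ii jj (a.1 + 1) (b.1 + 1)

section Intervals

variable {n : ℕ} {i1 j1 i2 j2 : ℤ}

lemma Overlap.of_lt (h : Overlap i1 j1 i2 j2) (hi : i1 < i2) : i2 ≤ j1 ∧ j1 < j2 := by
  unfold Overlap at h; omega

lemma Overlap.of_gt (h : Overlap i1 j1 i2 j2) (hi : i2 < i1) : i1 ≤ j2 ∧ j2 < j1 := by
  unfold Overlap at h; omega

lemma Overlap.of_merge {i j i' j' a b : ℤ} (hi : i' < i) (hj : j' < j)
    (h : Overlap i j' a b) : Overlap i' j' a b ∨ Overlap i j a b := by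
  unfold Overlap at h ⊢; omega

lemma Overlap.neg (h : Overlap i1 j1 i2 j2) : Overlap (-j1) (-i1) (-j2) (-i2) := by
  unfold Overlap at h ⊢; omega

lemma InIn.neg (h : InIn n i1 j1) : InIn n (-j1) (-i1) := by
  unfold InIn at h ⊢; omega

lemma ConnPair.neg (h : ConnPair n i1 j1 i2 j2) : ConnPair n (-j1) (-i1) (-j2) (-i2) :=
  ⟨h.1.neg, h.2.2.neg, h.2.1.neg⟩

def StableAt (i1 j1 i2 j2 : ℤ) : Prop :=
  (i2 < i1 → j2 < i1) ∧ (j1 < j2 → j1 < i2)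

lemma StableAt.neg (h : StableAt i1 j1 i2 j2) : StableAt (-j1) (-i1) (-j2) (-i2) := by
  unfold StableAt at h ⊢; omega

lemma StableAt.lt_of_le (h : StableAt i1 j1 i2 j2) (hne : i1 ≠ i2) (hle : i1 ≤ j2) : i1 < i2 := by
  unfold StableAt at h; omega

lemma StableAt.merge {i0 j0 : ℤ} (h : StableAt i1 j1 i2 j2) (hj : j1 < j0)
    (hno : ¬ Overlap i0 j0 i2 j2) (hle : i2 ≤ j1) : StableAt i0 j1 i2 j2 := by
  unfold StableAt Overlap at *; omega

end Intervals

section Monotone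

variable {f g : ℕ → ℤ} {a b : ℕ}

lemma SLeft.strictAntiOn_fst (h : SLeft f g a b) : StrictAntiOn f (Set.Icc (a + 1) b) :=
  strictAntiOn_of_add_one_lt Set.ordConnected_Icc fun s _ hs hs' => (h s hs.1 hs'.2).1

lemma SLeft.strictAntiOn_snd (h : SLeft f g a b) : StrictAntiOn g (Set.Icc (a + 1) b) :=
  strictAntiOn_of_add_one_lt Set.ordConnected_Icc fun s _ hs hs' => (h s hs.1 hs'.2).2

lemma SRight.strictMonoOn_fst (h : SRight f g a b) : StrictMonoOn f (Set.Icc (a + 1) b) :=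
  strictMonoOn_of_lt_add_one Set.ordConnected_Icc fun s _ hs hs' => (h s hs.1 hs'.2).1

lemma not_sLeft_and_sRight (hab : a + 2 ≤ b) : ¬ (SLeft f g a b ∧ SRight f g a b) :=
  fun ⟨hL, hR⟩ => (hL (a + 1) le_rfl hab).1.not_gt (hR (a + 1) le_rfl hab).1

lemma sLeft_neg_iff : SLeft (fun s => -g s) (fun s => -f s) a b ↔ SRight f g a b :=
  forall₂_congr fun s _ => imp_congr_right fun _ => by simp only [neg_lt_neg_iff]; tauto

lemma sRight_neg_iff : SRight (fun s => -g s) (fun s => -f s) a b ↔ SLeft f g a b :=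
  forall₂_congr fun s _ => imp_congr_right fun _ => by simp only [neg_lt_neg_iff]; tauto

lemma mono_alt_of_parity {f g : ℕ → ℤ} {R : ℕ → ℕ} {K d : ℕ}
    (hR : ∀ m, m < K → 1 ≤ R m ∧ R m < R (m + 1))
    (hdir : ∀ m, 1 ≤ m → m ≤ K →
      (Odd (m + d) → SLeft f g (R (m - 1) - 1) (R m)) ∧
      (Even (m + d) → SRight f g (R (m - 1) - 1) (R m))) :
    (∀ m, 1 ≤ m → m ≤ K →
      SRight f g (R (m - 1) - 1) (R m) ∨ SLeft f g (R (m - 1) - 1) (R m)) ∧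
    (∀ m, 1 ≤ m → m < K →
      (SRight f g (R (m - 1) - 1) (R m) ↔ SLeft f g (R m - 1) (R (m + 1)))) := by
  refine ⟨fun m h1 h2 => ?_, fun m h1 h2 => ?_⟩
  · rcases Nat.even_or_odd (m + d) with he | ho
    · exact Or.inl ((hdir m h1 h2).2 he)
    · exact Or.inr ((hdir m h1 h2).1 ho)
  · have hcur := hdir m h1 h2.le
    have hnext := hdir (m + 1) (by omega) h2
    rw [Nat.add_sub_cancel, add_right_comm, Nat.odd_add_one, Nat.even_add_one,
      Nat.not_odd_iff_even, Nat.not_even_iff_odd] at hnext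
    rcases Nat.even_or_odd (m + d) with he | ho
    · exact iff_of_true (hcur.2 he) (hnext.1 he)
    · have hprev := hR (m - 1) (by omega)
      have hcurr := hR m h2
      rw [Nat.sub_add_cancel h1] at hprev
      exact iff_of_false (fun hR' => not_sLeft_and_sRight (by omega) ⟨hcur.1 ho, hR'⟩)
        (fun hL => not_sLeft_and_sRight (by omega) ⟨hL, hnext.2 ho⟩)

end Monotone

/-- In the case `S_←`, `𝐬_p` has left endpoints `eraseAt p ii` and right endpoints `jj (· + 1)`. -/
def eraseAt (p : ℕ) (f : ℕ → ℤ) : ℕ → ℤ := fun s => if s < p then f s else f (s + 1)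

section EraseAt

variable {f g : ℕ → ℤ} {p a b s : ℕ}

lemma eraseAt_apply_of_lt (h : s < p) : eraseAt p f s = f s := if_pos h

lemma eraseAt_apply_of_le (h : p ≤ s) : eraseAt p f s = f (s + 1) := if_neg h.not_gt

lemma SLeft.eraseAt_inside (h : SLeft f g 0 b) (hp : p ≤ b) :
    SLeft (eraseAt p f) (fun s => g (s + 1)) 0 (b - 1) := by
  intro s hs1 hs2
  refine ⟨?_, h (s + 1) (by omega) (by omega) |>.2⟩
  simp only [eraseAt]
  split_ifs <;> exact h.strictAntiOn_fst ⟨by omega, by omega⟩ ⟨by omega, by omega⟩ (by omega)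

lemma SLeft.eraseAt_before (h : SLeft f g (a + 1) (b + 1)) (hp : p ≤ a + 1) :
    SLeft (eraseAt p f) (fun s => g (s + 1)) a b := by
  intro s hs1 hs2
  rw [eraseAt_apply_of_le (by omega), eraseAt_apply_of_le (by omega)]
  exact h (s + 1) (by omega) (by omega)

lemma SRight.eraseAt_before (h : SRight f g (a + 1) (b + 1)) (hp : p ≤ a + 1) :
    SRight (eraseAt p f) (fun s => g (s + 1)) a b := by
  intro s hs1 hs2
  rw [eraseAt_apply_of_le (by omega), eraseAt_apply_of_le (by omega)]
  exact h (s + 1) (by omega) (by omega)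

end EraseAt

lemma delta1_cases (rr : ℕ → ℕ) : delta1 rr = 1 ∧ rr 1 = 2 ∨ delta1 rr = 0 ∧ rr 1 ≠ 2 := by
  unfold delta1; split_ifs <;> simp_all

lemma rrQ_zero (rr : ℕ → ℕ) : rrQ rr 0 = 1 := rfl

lemma rrQ_of_ne_zero (rr : ℕ → ℕ) {t : ℕ} (ht : t ≠ 0) : rrQ rr t = rr (t + delta1 rr) - 1 :=
  if_neg ht

namespace IsAltSnake

variable {n r k : ℕ} {rr : ℕ → ℕ} {ii jj : ℕ → ℤ}

lemma rr_strictMonoOn (h : IsAltSnake n r k rr ii jj) : StrictMonoOn rr (Set.Iic k) :=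
  strictMonoOn_of_lt_add_one Set.ordConnected_Iic fun m _ _ hm => h.rrmono m hm

lemma rr_lt_rr (h : IsAltSnake n r k rr ii jj) {a b : ℕ} (hab : a < b) (hb : b ≤ k) :
    rr a < rr b :=
  h.rr_strictMonoOn (hab.le.trans hb) hb hab

lemma rr_le_rr (h : IsAltSnake n r k rr ii jj) {a b : ℕ} (hab : a ≤ b) (hb : b ≤ k) :
    rr a ≤ rr b :=
  h.rr_strictMonoOn.monotoneOn (hab.trans hb) hb hab

lemma succ_le_rr (h : IsAltSnake n r k rr ii jj) {a : ℕ} (ha : a ≤ k) : a + 1 ≤ rr a := by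
  induction a with
  | zero => exact h.rr0.ge
  | succ a ih => exact (ih (by omega)).trans_lt (h.rrmono a (by omega))

lemma lt_of_rr_lt (h : IsAltSnake n r k rr ii jj) {m : ℕ} (hm : m ≤ k) (hr : rr m < r) : m < k :=
  hm.lt_of_ne fun e => by rw [e, h.rrk] at hr; exact lt_irrefl r hr

lemma not_sLeft_and_sRight_segment (h : IsAltSnake n r k rr ii jj) {m : ℕ} (hm : 1 ≤ m)
    (hmk : m ≤ k) :
    ¬ (SLeft ii jj (rr (m - 1) - 1) (rr m) ∧ SRight ii jj (rr (m - 1) - 1) (rr m)) := by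
  have := h.rr_lt_rr (show m - 1 < m by omega) hmk
  have := h.succ_le_rr (show m - 1 ≤ k by omega)
  exact not_sLeft_and_sRight (by omega)

lemma sLeft_of_odd_sRight_of_even (h : IsAltSnake n r k rr ii jj) (hsl : SLeft ii jj 0 (rr 1))
    {m : ℕ} (hm : 1 ≤ m) (hmk : m ≤ k) :
    (Odd m → SLeft ii jj (rr (m - 1) - 1) (rr m)) ∧
      (Even m → SRight ii jj (rr (m - 1) - 1) (rr m)) := by
  induction m, hm using Nat.le_induction with
  | base => simpa [h.rr0] using hsl
  | succ m hm ih =>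
    have halt := h.alt m hm (by omega)
    have hmono := h.mono (m + 1) (by omega) hmk
    have hex := h.not_sLeft_and_sRight_segment hm (by omega)
    simp only [Nat.add_sub_cancel] at halt hmono ⊢
    rcases Nat.even_or_odd m with hev | hodd
    · have hR := (ih (by omega)).2 hev
      exact ⟨fun _ => halt.1 hR, fun hev' => absurd hev' (by simpa [Nat.even_add_one] using hev)⟩
    · have hL := (ih (by omega)).1 hodd
      refine ⟨fun hodd' => absurd hodd' (by simpa [Nat.odd_add_one] using hodd), fun _ => ?_⟩
      exact hmono.resolve_right fun hL' => hex ⟨hL, halt.2 hL'⟩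

lemma rrQ_lt (h : IsAltSnake n r k rr ii jj) {m : ℕ} (hm : m < k - delta1 rr) :
    1 ≤ rrQ rr m ∧ rrQ rr m < rrQ rr (m + 1) := by
  rw [rrQ_of_ne_zero rr (show m + 1 ≠ 0 by omega)]
  have hlt := h.rr_lt_rr (show m + delta1 rr < m + 1 + delta1 rr by omega) (by omega)
  rcases Nat.eq_zero_or_pos m with rfl | hm0
  · rcases delta1_cases rr with ⟨hd, h1⟩ | ⟨hd, h1⟩ <;>
      simp only [rrQ_zero, hd, Nat.zero_add, Nat.add_zero, Nat.reduceAdd] at hlt ⊢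
    · omega
    · have := h.succ_le_rr (show 1 ≤ k by omega); omega
  · rw [rrQ_of_ne_zero rr hm0.ne']
    have := h.succ_le_rr (show m + delta1 rr ≤ k by omega)
    omega

lemma neg (h : IsAltSnake n r k rr ii jj) :
    IsAltSnake n r k rr (fun s => -jj s) (fun s => -ii s) := by
  refine ⟨h.hr, h.hk, fun s h1 h2 => (h.mem s h1 h2).neg, ?_, h.rr0, h.rrk, h.rrmono,
    ?_, ?_, fun m s t h1 h2 h3 h4 h5 h6 hO => h.nonoverlap m s t h1 h2 h3 h4 h5 h6 ?_⟩
  · intro s q h1 h2 h3 h4 hsq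
    simpa only [ne_eq, neg_inj, or_comm] using h.distinct s q h1 h2 h3 h4 hsq
  · intro m h1 h2
    rw [sLeft_neg_iff, sRight_neg_iff]
    exact (h.mono m h1 h2).symm
  · intro m h1 h2
    have halt := h.alt m h1 h2
    have hmono := h.mono m h1 h2.le
    have hmono' := h.mono (m + 1) (by omega) h2
    have hex := h.not_sLeft_and_sRight_segment h1 h2.le
    have hex' := h.not_sLeft_and_sRight_segment (m := m + 1) (by omega) h2
    simp only [Nat.add_sub_cancel] at hmono' hex'
    rw [sLeft_neg_iff, sRight_neg_iff]
    exact ⟨fun hL => hmono'.resolve_right fun hL' => hex ⟨hL, halt.2 hL'⟩,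
      fun hR => hmono.resolve_left fun hR' => hex' ⟨halt.1 hR', hR⟩⟩
  · simpa only [neg_neg] using hO.neg

end IsAltSnake

section Dual

variable {n r k : ℕ} {rr : ℕ → ℕ} {ii jj : ℕ → ℤ}

lemma SegConnected.neg {a b : ℕ} (h : SegConnected n ii jj a b) :
    SegConnected n (fun s => -jj s) (fun s => -ii s) a b :=
  fun s h1 h2 => (h s h1 h2).neg

lemma SegPrime.neg {a b : ℕ} (h : SegPrime n k rr ii jj a b) :
    SegPrime n k rr (fun s => -jj s) (fun s => -ii s) a b := by
  refine ⟨h.1.neg, fun m h1 h2 h3 h4 => ?_⟩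
  simpa only [ne_eq, neg_inj, and_comm] using h.2 m h1 h2 h3 h4

lemma Stable.stableAt (h : Stable k rr ii jj) {m : ℕ} (h1 : 1 ≤ m) (h2 : m < k) :
    StableAt (ii (rr m - 1)) (jj (rr m - 1)) (ii (rr m + 1)) (jj (rr m + 1)) :=
  h m h1 h2

lemma Stable.neg (h : Stable k rr ii jj) : Stable k rr (fun s => -jj s) (fun s => -ii s) :=
  fun _ h1 h2 => (h.stableAt h1 h2).neg

end Dual

structure IsPrimeStableSnake (n r k : ℕ) (rr : ℕ → ℕ) (ii jj : ℕ → ℤ) : Prop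
    extends IsAltSnake n r k rr ii jj where
  one_le_k : 1 ≤ k
  prime : SegPrime n k rr ii jj 0 r
  stable : Stable k rr ii jj

namespace IsPrimeStableSnake

variable {n r k : ℕ} {rr : ℕ → ℕ} {ii jj : ℕ → ℤ} {p : ℕ}

lemma neg (hs : IsPrimeStableSnake n r k rr ii jj) :
    IsPrimeStableSnake n r k rr (fun s => -jj s) (fun s => -ii s) :=
  ⟨hs.toIsAltSnake.neg, hs.one_le_k, hs.prime.neg, hs.stable.neg⟩

lemma overlap (hs : IsPrimeStableSnake n r k rr ii jj) {s : ℕ} (h1 : 1 ≤ s) (h2 : s + 1 ≤ r) :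
    Overlap (ii s) (jj s) (ii (s + 1)) (jj (s + 1)) :=
  (hs.prime.1 s h1 h2).1

lemma ne_at_break (hs : IsPrimeStableSnake n r k rr ii jj) {m : ℕ} (h1 : 1 ≤ m) (h2 : m < k) :
    ii (rr m - 1) ≠ ii (rr m + 1) ∧ jj (rr m - 1) ≠ jj (rr m + 1) := by
  have := hs.succ_le_rr (show m ≤ k by omega)
  have := hs.rr_lt_rr h2 le_rfl
  exact hs.prime.2 m h1 h2 (by omega) (by rw [← hs.rrk]; exact this)

lemma two_le_rr_one (hs : IsPrimeStableSnake n r k rr ii jj) : 2 ≤ rr 1 :=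
  hs.succ_le_rr hs.one_le_k

lemma sRight_segment_two (hs : IsPrimeStableSnake n r k rr ii jj) (hsl : SLeft ii jj 0 (rr 1))
    (hk : 2 ≤ k) : SRight ii jj (rr 1 - 1) (rr 2) :=
  (hs.sLeft_of_odd_sRight_of_even hsl (m := 2) (by omega) hk).2 even_two

lemma sLeft_segment_three (hs : IsPrimeStableSnake n r k rr ii jj) (hsl : SLeft ii jj 0 (rr 1))
    (hk : 3 ≤ k) : SLeft ii jj (rr 2 - 1) (rr 3) :=
  (hs.sLeft_of_odd_sRight_of_even hsl (m := 3) (by omega) hk).1 (by decide)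

/-- Stability forbids `i_{r_1+1} < i_{r_1-1}`, since `i_{r_1-1} ≤ j_{r_1} < j_{r_1+1}`. -/
lemma ii_lt_at_rr_one (hs : IsPrimeStableSnake n r k rr ii jj) (hsl : SLeft ii jj 0 (rr 1))
    (hk : 2 ≤ k) : ii (rr 1 - 1) < ii (rr 1 + 1) := by
  have h12 := hs.rr_lt_rr (show 1 < 2 by omega) hk
  have h2k := hs.rr_le_rr hk le_rfl
  have := hs.rrk
  have := hs.two_le_rr_one
  have hstep := (hs.overlap (s := rr 1 - 1) (by omega) (by omega)).of_gt
    (hsl (rr 1 - 1) (by omega) (by omega)).1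
  rw [show rr 1 - 1 + 1 = rr 1 by omega] at hstep
  have hR := hs.sRight_segment_two hsl hk (rr 1) (by omega) (by omega)
  exact (hs.stable.stableAt le_rfl (by omega)).lt_of_le (hs.ne_at_break le_rfl (by omega)).1
    (by linarith [hstep.1, hR.2])

lemma merge_ne_of_rightStep (hs : IsPrimeStableSnake n r k rr ii jj)
    (hsl : SLeft ii jj 0 (rr 1)) {s w : ℕ} (hs1 : 1 ≤ s) (hs2 : s + 1 ≤ rr 1) (hw : rr 1 ≤ w)
    (hwr : w + 1 ≤ r) (hstep : ii w < ii (w + 1)) (hi : ii (w + 1) = ii s)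
    (hj : jj (w + 1) = jj (s + 1)) : False := by
  have hk : 2 ≤ k := hs.lt_of_rr_lt hs.one_le_k (by omega)
  obtain ⟨hle, hlt⟩ := (hs.overlap (s := w) (by omega) hwr).of_lt hstep
  have hanti_i := hsl.strictAntiOn_fst
  have hanti_j := hsl.strictAntiOn_snd
  rcases hw.eq_or_lt with rfl | hw
  · have hs3 : s + 2 < rr 1 := by
      have hne : s + 1 ≠ rr 1 := by rintro he; rw [hj, he] at hlt; exact lt_irrefl _ hlt
      have hne' : s + 1 ≠ rr 1 - 1 := by
        rintro he; exact (hs.ne_at_break le_rfl hk).2 (by rw [← he, hj])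
      omega
    refine hs.nonoverlap 1 (rr 1 - 1) (rr 1 + 1) le_rfl (by omega) (by omega) (by omega)
      (by omega) hwr (Or.inl ⟨?_, ?_, ?_⟩)
    · rw [hi]; exact hanti_i ⟨by omega, by omega⟩ ⟨by omega, by omega⟩ (by omega)
    · exact hle.trans (hanti_j ⟨by omega, by omega⟩ ⟨by omega, by omega⟩ (by omega)).le
    · rw [hj]; exact hanti_j ⟨by omega, by omega⟩ ⟨by omega, by omega⟩ (by omega)
  · have hjs := (hsl s hs1 hs2).2
    exact hs.nonoverlap 1 s w le_rfl (by omega) hs1 (by omega) hw (by omega)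
      (Or.inr ⟨hi ▸ hstep, hi ▸ hle, by omega⟩)

lemma merge_ne_of_leftStep (hs : IsPrimeStableSnake n r k rr ii jj)
    (hsl : SLeft ii jj 0 (rr 1)) {s w : ℕ} (hs1 : 1 ≤ s) (hs2 : s + 1 ≤ rr 1) (hw : rr 1 ≤ w)
    (hwr : w + 1 ≤ r) (hstep : ii (w + 1) < ii w) (hi : ii (w + 1) = ii s)
    (hj : jj (w + 1) = jj (s + 1)) : False := by
  have hk2 : 2 ≤ k := hs.lt_of_rr_lt hs.one_le_k (by omega)
  obtain ⟨hle, hlt⟩ := (hs.overlap (s := w) (by omega) hwr).of_gt hstep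
  have hR := hs.sRight_segment_two hsl hk2
  have h12 := hs.rr_lt_rr (show 1 < 2 by omega) hk2
  have hw2 : rr 2 ≤ w := by
    by_contra
    exact (hR w (by omega) (by omega)).1.not_gt hstep
  have hk3 : 3 ≤ k := hs.lt_of_rr_lt hk2 (by omega)
  have hO : Overlap (ii (s + 1)) (jj (s + 1)) (ii w) (jj w) :=
    Or.inl ⟨by linarith [(hsl s hs1 hs2).1], hj ▸ hle, hj ▸ hlt⟩
  rcases hw2.eq_or_lt with rfl | hw2
  · rcases Nat.lt_or_ge (s + 1) (rr 1) with hs3 | hs3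
    · exact hs.nonoverlap 1 (s + 1) (rr 2) le_rfl (by omega) (by omega) hs3 h12 (by omega) hO
    -- `w = r_2` and `s + 1 = r_1`: then `i_{r_1+1} ≤ i_{r_2-1} < i_{r_2+1} = i_{r_1-1}`,
    -- against `ii_lt_at_rr_one`
    obtain ⟨hne_i, hne_j⟩ := hs.ne_at_break (m := 2) (by omega) (by omega)
    have hr12 : rr 1 + 1 < rr 2 := by
      by_contra
      exact hne_j (by rw [hj, show rr 2 - 1 = s + 1 by omega])
    have hR2 := hR (rr 2 - 1) (by omega) (by omega)
    rw [show rr 2 - 1 + 1 = rr 2 by omega] at hR2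
    have hlt2 := (hs.stable.stableAt (m := 2) (by omega) (by omega)).lt_of_le hne_i
      (by linarith [hR2.1])
    have hmono := hR.strictMonoOn_fst.monotoneOn (a := rr 1 + 1) (b := rr 2 - 1)
      ⟨by omega, by omega⟩ ⟨by omega, by omega⟩ (by omega)
    have := hs.ii_lt_at_rr_one hsl hk2
    rw [hi, show s = rr 1 - 1 by omega] at hlt2
    linarith
  · exact hs.nonoverlap 2 (s + 1) w (by omega) (by omega) (by omega) (by omega) hw2 (by omega) hO

lemma merge_ne (hs : IsPrimeStableSnake n r k rr ii jj) (hsl : SLeft ii jj 0 (rr 1))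
    {s v : ℕ} (hs1 : 1 ≤ s) (hs2 : s + 1 ≤ rr 1) (hv : rr 1 < v) (hvr : v ≤ r) :
    ii v ≠ ii s ∨ jj v ≠ jj (s + 1) := by
  obtain ⟨w, rfl⟩ : ∃ w, v = w + 1 := ⟨v - 1, by omega⟩
  by_contra! ⟨hi, hj⟩
  rcases hs.overlap (s := w) (by omega) hvr with ⟨hstep, -⟩ | ⟨hstep, -⟩
  · exact hs.merge_ne_of_rightStep hsl hs1 hs2 (by omega) hvr hstep hi hj
  · exact hs.merge_ne_of_leftStep hsl hs1 hs2 (by omega) hvr hstep hi hj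

lemma sRight_eraseAt_segment_two (hs : IsPrimeStableSnake n r k rr ii jj)
    (hsl : SLeft ii jj 0 (rr 1)) (hp : p ≤ rr 1) (hk : 2 ≤ k) :
    SRight (eraseAt p ii) (fun s => jj (s + 1)) (rr 1 - 2) (rr 2 - 1) := by
  have hR := hs.sRight_segment_two hsl hk
  have := hs.two_le_rr_one
  intro s hs1 hs2
  refine ⟨?_, (hR (s + 1) (by omega) (by omega)).2⟩
  rw [eraseAt_apply_of_le (show p ≤ s + 1 by omega)]
  rcases Nat.lt_or_ge s p with hsp | hsp
  · rw [eraseAt_apply_of_lt hsp, show s = rr 1 - 1 by omega,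
      show rr 1 - 1 + 1 + 1 = rr 1 + 1 by omega]
    exact hs.ii_lt_at_rr_one hsl hk
  · rw [eraseAt_apply_of_le hsp]
    exact (hR (s + 1) (by omega) (by omega)).1

/-- Segment `m` of the shortened snake runs in the direction of segment `m + δ` of `𝐬`. -/
lemma eraseAt_dir (hs : IsPrimeStableSnake n r k rr ii jj) (hsl : SLeft ii jj 0 (rr 1))
    (hp : p ≤ rr 1) {m : ℕ} (hm : 1 ≤ m) (hmK : m ≤ k - delta1 rr) :
    (Odd (m + delta1 rr) →
      SLeft (eraseAt p ii) (fun s => jj (s + 1)) (rrQ rr (m - 1) - 1) (rrQ rr m)) ∧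
    (Even (m + delta1 rr) →
      SRight (eraseAt p ii) (fun s => jj (s + 1)) (rrQ rr (m - 1) - 1) (rrQ rr m)) := by
  rw [rrQ_of_ne_zero rr (show m ≠ 0 by omega)]
  obtain hM | hM | hM : m + delta1 rr = 1 ∨ m + delta1 rr = 2 ∨ 3 ≤ m + delta1 rr := by omega
  · obtain rfl : m = 1 := by omega
    rw [hM, rrQ_zero]
    exact ⟨fun _ => hsl.eraseAt_inside hp, fun h => absurd h (by decide)⟩
  · have hstart : rrQ rr (m - 1) - 1 = rr 1 - 2 := by
      rcases delta1_cases rr with ⟨hd, h1⟩ | ⟨hd, h1⟩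
      · obtain rfl : m = 1 := by omega
        rw [h1]; rfl
      · rw [rrQ_of_ne_zero rr (show m - 1 ≠ 0 by omega), hd, show m - 1 + 0 = 1 by omega]; rfl
    rw [hM, hstart]
    exact ⟨fun h => absurd h (by decide), fun _ => hs.sRight_eraseAt_segment_two hsl hp (by omega)⟩
  · set M := m + delta1 rr with hMdef
    have := delta1_cases rr
    have := hs.two_le_rr_one
    have hdir := hs.sLeft_of_odd_sRight_of_even hsl (m := M) (by omega) (by omega)
    have h1 := hs.rr_lt_rr (show 1 < M - 1 by omega) (by omega)
    have hM1 := hs.rr_lt_rr (show M - 1 < M by omega) (by omega)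
    rw [rrQ_of_ne_zero rr (show m - 1 ≠ 0 by omega), show m - 1 + delta1 rr = M - 1 by omega]
    have e1 : rr (M - 1) - 1 - 1 + 1 = rr (M - 1) - 1 := by omega
    have e2 : rr M - 1 + 1 = rr M := by omega
    refine ⟨fun ho => SLeft.eraseAt_before ?_ (by omega),
      fun he => SRight.eraseAt_before ?_ (by omega)⟩
    · rw [e1, e2]; exact hdir.1 ho
    · rw [e1, e2]; exact hdir.2 he

lemma eraseAt_distinct_of_lt (hs : IsPrimeStableSnake n r k rr ii jj)
    (hsl : SLeft ii jj 0 (rr 1)) (hp : p ≤ rr 1) {s t : ℕ} (hs1 : 1 ≤ s) (hst : s < t)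
    (ht : t ≤ r - 1) : eraseAt p ii s ≠ eraseAt p ii t ∨ jj (s + 1) ≠ jj (t + 1) := by
  rcases Nat.lt_or_ge t (rr 1) with htr | htr
  · exact Or.inr (hsl.strictAntiOn_snd ⟨by omega, by omega⟩ ⟨by omega, by omega⟩ (by omega)).ne'
  rw [eraseAt_apply_of_le (show p ≤ t by omega)]
  rcases Nat.lt_or_ge s p with hsp | hsp
  · rw [eraseAt_apply_of_lt hsp]
    exact (hs.merge_ne hsl hs1 (by omega) (by omega) (by omega)).imp Ne.symm Ne.symm
  · rw [eraseAt_apply_of_le hsp]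
    exact hs.distinct (s + 1) (t + 1) (by omega) (by omega) (by omega) (by omega) (by omega)

lemma eraseAt_nonoverlap (hs : IsPrimeStableSnake n r k rr ii jj)
    (hsl : SLeft ii jj 0 (rr 1)) (hp : p ≤ rr 1) {m s t : ℕ} (hm : 1 ≤ m)
    (hmK : m < k - delta1 rr) (hs1 : 1 ≤ s) (hsm : s < rrQ rr m) (hmt : rrQ rr m < t)
    (ht : t ≤ r - 1) :
    ¬ Overlap (eraseAt p ii s) (jj (s + 1)) (eraseAt p ii t) (jj (t + 1)) := by
  rw [rrQ_of_ne_zero rr (by omega)] at hsm hmt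
  have h1M := hs.rr_le_rr (show 1 ≤ m + delta1 rr by omega) (by omega)
  have := hs.rrk
  have hno : ∀ s', 1 ≤ s' → s' < rr (m + delta1 rr) →
      ¬ Overlap (ii s') (jj s') (ii (t + 1)) (jj (t + 1)) := fun s' h1 h2 =>
    hs.nonoverlap _ s' (t + 1) (by omega) (by omega) h1 h2 (by omega) (by omega)
  rw [eraseAt_apply_of_le (show p ≤ t by omega)]
  rcases Nat.lt_or_ge s p with hsp | hsp
  · rw [eraseAt_apply_of_lt hsp]
    intro hO
    have hstep := hsl s hs1 (by omega)
    rcases hO.of_merge hstep.1 hstep.2 with hO | hO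
    · exact hno (s + 1) (by omega) (by omega) hO
    · exact hno s hs1 (by omega) hO
  · rw [eraseAt_apply_of_le hsp]
    exact hno (s + 1) (by omega) (by omega)

/-- The entry of `𝐬_p` just before its break `r_M - 1` is the merged interval
`[i_{r_M-2}, j_{r_M-1}]` only for `M = 1`, or for `M = 2` with `r_2 = r_1 + 1`. -/
lemma stableAt_merged (hs : IsPrimeStableSnake n r k rr ii jj) (hsl : SLeft ii jj 0 (rr 1))
    {M : ℕ} (hM : 1 ≤ M) (hMk : M < k) (hMr : rr M ≤ rr 1 + 1) (h3 : 3 ≤ rr M) :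
    StableAt (ii (rr M - 2)) (jj (rr M - 1)) (ii (rr M + 1)) (jj (rr M + 1)) := by
  have hk2 : 2 ≤ k := by omega
  have hR := hs.sRight_segment_two hsl hk2
  have h12 := hs.rr_lt_rr (show 1 < 2 by omega) hk2
  have hMr' := hs.rr_lt_rr hMk le_rfl
  have := hs.rr_le_rr hk2 le_rfl
  have := hs.rrk
  obtain ⟨hle, -⟩ := (hs.overlap (s := rr 1) (by omega) (by omega)).of_lt
    (hR (rr 1) (by omega) (by omega)).1
  have hstep := hsl (rr M - 2) (by omega) (by omega)
  rw [show rr M - 2 + 1 = rr M - 1 by omega] at hstep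
  refine (hs.stable.stableAt hM hMk).merge hstep.2
    (hs.nonoverlap M (rr M - 2) (rr M + 1) hM hMk (by omega) (by omega) (by omega) (by omega)) ?_
  obtain rfl | rfl : M = 1 ∨ M = 2 := by
    by_contra!
    have := hs.rr_lt_rr (show 2 < M by omega) hMk.le
    omega
  · have := (hsl (rr 1 - 1) (by omega) (by omega)).2
    rw [show rr 1 - 1 + 1 = rr 1 by omega] at this
    linarith
  · have := hs.rr_lt_rr (show 2 < 3 by omega) hMk
    have hL := (hs.sLeft_segment_three hsl (by omega) (rr 2) (by omega) (by omega)).1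
    rw [show rr 2 - 1 = rr 1 by omega]
    rw [show rr 2 = rr 1 + 1 by omega] at hL ⊢
    linarith

lemma eraseAt_stable (hs : IsPrimeStableSnake n r k rr ii jj) (hsl : SLeft ii jj 0 (rr 1))
    (hp : p ≤ rr 1) :
    Stable (k - delta1 rr) (rrQ rr) (eraseAt p ii) (fun s => jj (s + 1)) := by
  intro m hm hmK
  show StableAt _ _ _ _
  beta_reduce
  set M := m + delta1 rr with hM
  have := delta1_cases rr
  have h1M := hs.rr_le_rr (show 1 ≤ M by omega) (by omega)
  have h2 := hs.two_le_rr_one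
  rw [rrQ_of_ne_zero rr (by omega), ← hM, show rr M - 1 + 1 = rr M by omega,
    show rr M - 1 - 1 = rr M - 2 by omega, eraseAt_apply_of_le (show p ≤ rr M by omega)]
  rcases Nat.lt_or_ge (rr M - 2) p with hlo | hlo
  · rw [eraseAt_apply_of_lt hlo, show rr M - 2 + 1 = rr M - 1 by omega]
    refine hs.stableAt_merged hsl (by omega) (by omega) (by omega) ?_
    rcases Nat.lt_or_ge 1 M with h1 | h1
    · have := hs.rr_lt_rr h1 (show M ≤ k by omega)
      omega
    · rw [show M = 1 by omega]; omega
  · rw [eraseAt_apply_of_le hlo, show rr M - 2 + 1 = rr M - 1 by omega]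
    exact hs.stable.stableAt (by omega) (by omega)

lemma rrQ_last (hs : IsPrimeStableSnake n r k rr ii jj) : rrQ rr (k - delta1 rr) = r - 1 := by
  have := delta1_cases rr
  have := hs.rrk
  rcases Nat.eq_zero_or_pos (k - delta1 rr) with hK | hK
  · rw [hK, rrQ_zero]
    have : k = 1 := by have := hs.one_le_k; omega
    subst this
    omega
  · rw [rrQ_of_ne_zero rr hK.ne', Nat.sub_add_cancel (by omega), hs.rrk]

lemma eraseAt_isAltSnake (hs : IsPrimeStableSnake n r k rr ii jj) (hsl : SLeft ii jj 0 (rr 1))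
    (hp : p ≤ rr 1) :
    IsAltSnake n (r - 1) (k - delta1 rr) (rrQ rr) (eraseAt p ii) (fun s => jj (s + 1)) := by
  have hkr := hs.succ_le_rr (le_refl k)
  have := hs.rrk
  have := hs.two_le_rr_one
  have := hs.rr_le_rr hs.one_le_k le_rfl
  obtain ⟨hmono, halt⟩ := mono_alt_of_parity (R := rrQ rr) (fun m hm => hs.rrQ_lt hm)
    (fun m h1 h2 => hs.eraseAt_dir hsl hp h1 h2)
  refine ⟨by omega, by omega, fun s h1 h2 => ?_, fun s t h1 h2 h3 h4 hst => ?_, rrQ_zero rr,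
    hs.rrQ_last, fun m hm => (hs.rrQ_lt hm).2, hmono, halt,
    fun m s t h1 h2 h3 h4 h5 h6 => hs.eraseAt_nonoverlap hsl hp h1 h2 h3 h4 h5 h6⟩
  · rcases Nat.lt_or_ge s p with hsp | hsp
    · rw [eraseAt_apply_of_lt hsp]
      exact (hs.prime.1 s h1 (by omega)).2.1
    · rw [eraseAt_apply_of_le hsp]
      exact hs.mem (s + 1) (by omega) (by omega)
  · rcases hst.lt_or_gt with hst | hst
    · exact hs.eraseAt_distinct_of_lt hsl hp h1 hst h4
    · exact (hs.eraseAt_distinct_of_lt hsl hp h3 hst h2).imp Ne.symm Ne.symm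

end IsPrimeStableSnake

theorem stmt_14_general (n r k : ℕ) (rr : ℕ → ℕ) (ii jj : ℕ → ℤ)
    (h : IsAltSnake n r k rr ii jj) (hk : 1 ≤ k)
    (hprime : SegPrime n k rr ii jj 0 r) (hstable : Stable k rr ii jj)
    (p : ℕ) (hp2 : p ≤ rr 1) :
    (SLeft ii jj 0 (rr 1) →
      IsAltSnake n (r - 1) (k - delta1 rr) (rrQ rr)
        (fun s => if s < p then ii s else ii (s + 1)) (fun s => jj (s + 1)) ∧
      Stable (k - delta1 rr) (rrQ rr)
        (fun s => if s < p then ii s else ii (s + 1)) (fun s => jj (s + 1))) ∧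
    (SRight ii jj 0 (rr 1) →
      IsAltSnake n (r - 1) (k - delta1 rr) (rrQ rr)
        (fun s => ii (s + 1)) (fun s => if s < p then jj s else jj (s + 1)) ∧
      Stable (k - delta1 rr) (rrQ rr)
        (fun s => ii (s + 1)) (fun s => if s < p then jj s else jj (s + 1))) := by
  have hs : IsPrimeStableSnake n r k rr ii jj := ⟨h, hk, hprime, hstable⟩
  refine ⟨fun hsl => ⟨hs.eraseAt_isAltSnake hsl hp2, hs.eraseAt_stable hsl hp2⟩, fun hsr => ?_⟩
  have hsl : SLeft (fun s => -jj s) (fun s => -ii s) 0 (rr 1) := sLeft_neg_iff.2 hsr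
  have hsnake := (hs.neg.eraseAt_isAltSnake hsl hp2).neg
  have hstab := (hs.neg.eraseAt_stable hsl hp2).neg
  simp only [eraseAt, apply_ite, neg_neg] at hsnake hstab
  exact ⟨hsnake, hstab⟩

/-- Proposition (sps): for a prime stable alternating snake `𝐬` and `1 ≤ p ≤ r_1`, the
tuple `𝐬_p` (defined according to the direction of `𝐬(0,r_1)`) with r-vector
`(1, r_{1+δ}−1, …, r_k−1)`, `δ = 1` iff `r_1 = 2`, is a stable alternating snake. -/
theorem stmt_14 (n r k : ℕ) (hn : 1 ≤ n) (rr : ℕ → ℕ) (ii jj : ℕ → ℤ)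
    (h : IsAltSnake n r k rr ii jj) (hk : 1 ≤ k)
    (hprime : SegPrime n k rr ii jj 0 r) (hstable : Stable k rr ii jj)
    (p : ℕ) (hp1 : 1 ≤ p) (hp2 : p ≤ rr 1) :
    (SLeft ii jj 0 (rr 1) →
      IsAltSnake n (r - 1) (k - delta1 rr) (rrQ rr)
        (fun s => if s < p then ii s else ii (s + 1)) (fun s => jj (s + 1)) ∧
      Stable (k - delta1 rr) (rrQ rr)
        (fun s => if s < p then ii s else ii (s + 1)) (fun s => jj (s + 1))) ∧
    (SRight ii jj 0 (rr 1) →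
      IsAltSnake n (r - 1) (k - delta1 rr) (rrQ rr)
        (fun s => ii (s + 1)) (fun s => if s < p then jj s else jj (s + 1)) ∧
      Stable (k - delta1 rr) (rrQ rr)
        (fun s => ii (s + 1)) (fun s => if s < p then jj s else jj (s + 1))) :=
  stmt_14_general n r k rr ii jj h hk hprime hstable p hp2

end AltSnakePaper
end

section
/- Let [i_1,j_1], [i_2,j_2] ∈ 𝕀_n with i_1 + j_1 > i_2 + j_2. Then [i_1,j_1] ∈ 𝒞⁻_{i_2,j_2} if and only if the pair ([i_1,j_1],[i_2,j_2]) is connected. -/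
namespace AltSnakePaper

/-- A Mukhin–Young path `g ∈ ℙ_{i,j}`. -/
def MYPath (n : ℕ) (i j : ℤ) (g : ℕ → ℤ) : Prop :=
  g 0 = 2 * j ∧ (∀ r : ℕ, r ≤ n → g (r + 1) - g r = 1 ∨ g (r + 1) - g r = -1) ∧
  g (n + 1) = (n : ℤ) + 1 + 2 * i

/-- `[x,y] ∈ 𝒞⁻_{i,j}`. -/
def CminusMem (n : ℕ) (i j : ℤ) (x y : ℤ) : Prop :=
  ∃ g : ℕ → ℤ, MYPath n i j g ∧ ∃ r : ℕ, 1 ≤ r ∧ r ≤ n ∧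
    g (r - 1) = g r - 1 ∧ g (r + 1) = g r - 1 ∧ 2 * x = g r - (r : ℤ) ∧ 2 * y = g r + (r : ℤ)

/-!
A path of `ℙ_{i,j}` moves by `±1` at each step, so it is `1`-Lipschitz. A local maximum of height
`x + y` at position `r = y - x` is therefore compatible with the endpoints `g 0 = 2j` and
`g (n + 1) = n + 1 + 2i` exactly when `i < x ≤ j < y` and `y - i ≤ n + 1`; conversely, under these
inequalities a zigzag path realises the peak. When `i₁ + j₁ > i₂ + j₂`, a connected pair can only
overlap as `i₂ < i₁ ≤ j₂ < j₁`, and the rest of connectedness is the same list of inequalities.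
-/

theorem MYPath.abs_sub_le {n : ℕ} {i j : ℤ} {g : ℕ → ℤ} (hg : MYPath n i j g) {a b : ℕ}
    (hab : a ≤ b) (hb : b ≤ n + 1) : |g b - g a| ≤ b - a := by
  induction b, hab using Nat.le_induction with
  | base => simp
  | succ b _ ih =>
    have hstep := hg.2.1 b (by omega)
    have := abs_le.mp (ih (by omega))
    rw [abs_le]
    push_cast
    omega

theorem CminusMem.bounds {n : ℕ} {i j x y : ℤ} (h : CminusMem n i j x y) :
    i < x ∧ x ≤ j ∧ j < y ∧ y - i ≤ n + 1 := by
  obtain ⟨g, hg, r, hr1, hrn, hleft, hright, hx, hy⟩ := h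
  have hstart := abs_le.mp (hg.abs_sub_le (a := 0) (b := r - 1) (by omega) (by omega))
  have hend := abs_le.mp (hg.abs_sub_le (a := r + 1) (b := n + 1) (by omega) le_rfl)
  rw [hg.1, hleft, Nat.cast_sub hr1] at hstart
  rw [hg.2.2, hright] at hend
  push_cast at hstart hend
  omega

/-- The zigzag descending from `2j` to a valley at `j - x`, climbing to the peak `x + y` at
`y - x`, descending to a valley at `y - i`, and climbing again. -/
def peakPath (i j x y : ℤ) (s : ℕ) : ℤ :=
  min (max (2 * j - s) (2 * x + s)) (max (2 * y - s) (2 * i + s))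

theorem mYPath_peakPath {n : ℕ} {i j x y : ℤ} (hix : i < x) (hxj : x ≤ j) (hjy : j < y)
    (hyi : y - i ≤ n + 1) : MYPath n i j (peakPath i j x y) := by
  refine ⟨?_, fun r _ => ?_, ?_⟩ <;> simp only [peakPath] <;> push_cast <;> omega

theorem cminusMem_of_bounds {n : ℕ} {i j x y : ℤ} (hix : i < x) (hxj : x ≤ j) (hjy : j < y)
    (hyi : y - i ≤ n + 1) : CminusMem n i j x y := by
  refine ⟨peakPath i j x y, mYPath_peakPath hix hxj hjy hyi, (y - x).toNat, ?_⟩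
  simp only [peakPath]
  omega

theorem cminusMem_iff {n : ℕ} {i j x y : ℤ} :
    CminusMem n i j x y ↔ i < x ∧ x ≤ j ∧ j < y ∧ y - i ≤ n + 1 :=
  ⟨CminusMem.bounds, fun ⟨hix, hxj, hjy, hyi⟩ => cminusMem_of_bounds hix hxj hjy hyi⟩

theorem stmt_16_general (n : ℕ) (i1 j1 i2 j2 : ℤ) (hsum : i2 + j2 < i1 + j1) :
    CminusMem n i2 j2 i1 j1 ↔ ConnPair n i1 j1 i2 j2 := by
  rw [cminusMem_iff]
  simp only [ConnPair, Overlap, InIn]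
  omega

/-- Lemma (ellwttau): for `[i1,j1], [i2,j2] ∈ 𝕀ₙ` with `i1 + j1 > i2 + j2`,
`[i1,j1] ∈ 𝒞⁻_{i2,j2}` iff `([i1,j1],[i2,j2])` is connected. -/
theorem stmt_16 (n : ℕ) (hn : 1 ≤ n) (i1 j1 i2 j2 : ℤ)
    (h1 : InIn n i1 j1) (h2 : InIn n i2 j2) (hsum : i2 + j2 < i1 + j1) :
    CminusMem n i2 j2 i1 j1 ↔ ConnPair n i1 j1 i2 j2 :=
  stmt_16_general n i1 j1 i2 j2 hsum

end AltSnakePaper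
end
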